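/- arXiv:1907.09111 — 3 statements merged into one kernel-verified Lean document; each statement's English description precedes it below -/
import Mathlib

section
/- Let n and q be natural numbers with 1 ≤ q ≤ n, let a : Fin n → ℝ satisfy 0 ≤ a k ≤ 1 for every k, and let c : ℝ be arbitrary. Then c ≤ sSup {x ∈ Set.Icc (0:ℝ) 1 | q ≤ (number of indices k with x ≤ a k)} if and only if q ≤ (number of indices k with c ≤ a k). (This is the issue-wise content of Proposition 1: the collective quota likelihood of an issue clears the threshold c exactly when at least q sources individually assign likelihood at least c.) -/
/-- Issue-wise content of Proposition 1: the collective quota likelihood of an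
issue clears the threshold `c` exactly when at least `q` sources individually
assign likelihood at least `c`. -/
theorem quota_crisp_iff (n q : ℕ) (hq1 : 1 ≤ q) (hqn : q ≤ n)
    (a : Fin n → ℝ) (ha : ∀ k, 0 ≤ a k ∧ a k ≤ 1) (c : ℝ) :
    c ≤ sSup {x ∈ Set.Icc (0:ℝ) 1 |
        q ≤ (Finset.univ.filter (fun k => x ≤ a k)).card} ↔
      q ≤ (Finset.univ.filter (fun k => c ≤ a k)).card := by
  set S : Set ℝ := {x ∈ Set.Icc (0:ℝ) 1 |
      q ≤ (Finset.univ.filter (fun k => x ≤ a k)).card} with hS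
  have h0 : (0:ℝ) ∈ S := by
    refine ⟨Set.mem_Icc.mpr ⟨le_refl 0, zero_le_one⟩, ?_⟩
    have heq : (Finset.univ.filter (fun k => (0:ℝ) ≤ a k)) = Finset.univ :=
      Finset.filter_true_of_mem (fun k _ => (ha k).1)
    simpa [heq] using hqn
  have hbdd : BddAbove S := ⟨1, fun x hx => hx.1.2⟩
  constructor
  · intro hc
    by_contra hcard
    push_neg at hcard
    have hc0 : 0 < c := by
      by_contra h
      push_neg at h
      have heq : (Finset.univ.filter (fun k => c ≤ a k)) = Finset.univ :=
        Finset.filter_true_of_mem (fun k _ => h.trans (ha k).1)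
      rw [heq] at hcard
      simp at hcard
      omega
    -- some source has a k < c
    have hne : (Finset.univ.filter (fun k => a k < c)).Nonempty := by
      by_contra h
      rw [Finset.not_nonempty_iff_eq_empty, Finset.filter_eq_empty_iff] at h
      have heq : (Finset.univ.filter (fun k => c ≤ a k)) = Finset.univ :=
        Finset.filter_true_of_mem (fun k hk => le_of_not_gt (h hk))
      rw [heq] at hcard
      simp at hcard
      omega
    set b := (Finset.univ.filter (fun k => a k < c)).sup' hne a with hb
    have hbc : b < c := by
      apply Finset.sup'_lt_iff hne |>.mpr
      intro k hk
      exact (Finset.mem_filter.mp hk).2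
    have hub : ∀ x ∈ S, x ≤ b := by
      intro x hx
      have hq' := hx.2
      have hnot : ¬ (Finset.univ.filter (fun k => x ≤ a k)) ⊆
          (Finset.univ.filter (fun k => c ≤ a k)) := by
        intro hsub
        have := Finset.card_le_card hsub
        omega
      rw [Finset.not_subset] at hnot
      obtain ⟨k, hk1, hk2⟩ := hnot
      have hxk : x ≤ a k := (Finset.mem_filter.mp hk1).2
      have hkc : a k < c := by
        simp only [Finset.mem_filter, Finset.mem_univ, true_and, not_le] at hk2
        exact hk2
      exact hxk.trans (Finset.le_sup' a (Finset.mem_filter.mpr ⟨Finset.mem_univ k, hkc⟩))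
    have : sSup S ≤ b := csSup_le ⟨0, h0⟩ hub
    linarith
  · intro h
    rcases le_or_gt c 0 with hc | hc
    · exact hc.trans (le_csSup hbdd h0)
    · have hc1 : c ≤ 1 := by
        have hne : (Finset.univ.filter (fun k => c ≤ a k)).Nonempty := by
          rw [← Finset.card_pos]; omega
        obtain ⟨k, hk⟩ := hne
        exact (Finset.mem_filter.mp hk).2.trans (ha k).2
      exact le_csSup hbdd ⟨Set.mem_Icc.mpr ⟨hc.le, hc1⟩, h⟩
end

section
/- Proposition 1 (the quota function commutes with the crispifying function): Let I be a finite type, let A : Fin n → I → ℝ be a likelihood profile with 0 ≤ A k φ ≤ 1 for all k and φ, let c : I → ℝ be a crispifying vector, and let q be a quota with 1 ≤ q ≤ n. Then crisp(f_q(A), c) = {φ : q ≤ card {k : c φ ≤ A k φ}}. In words: first aggregating the profile with the uniform quota function f_q and then crispifying with c yields the same set of issues as first crispifying each individual judgment set with c (source k accepts φ iff c φ ≤ A k φ) and then applying the crisp uniform quota rule U_q, which accepts an issue iff at least q sources accept it. -/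
/-- Proposition 1: the uniform quota function commutes with the crispifying
function.  First aggregating the likelihood profile `A` with the uniform quota
function `f_q` and then crispifying with the vector `c` yields the same set of
issues as first crispifying each individual judgment set with `c` and then
applying the crisp uniform quota rule `U_q`. -/
theorem quota_commutes_with_crisp {I : Type*} [Fintype I]
    (n q : ℕ) (hq1 : 1 ≤ q) (hqn : q ≤ n)
    (A : Fin n → I → ℝ) (hA : ∀ k φ, 0 ≤ A k φ ∧ A k φ ≤ 1)
    (c : I → ℝ) :
    {φ : I | c φ ≤ sSup {a ∈ Set.Icc (0:ℝ) 1 |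
        q ≤ (Finset.univ.filter (fun k => a ≤ A k φ)).card}} =
      {φ : I | q ≤ (Finset.univ.filter (fun k => c φ ≤ A k φ)).card} := by
  ext φ
  simp only [Set.mem_setOf_eq]
  set S : Set ℝ := {a ∈ Set.Icc (0:ℝ) 1 |
      q ≤ (Finset.univ.filter (fun k => a ≤ A k φ)).card} with hS
  have h0S : (0:ℝ) ∈ S := by
    constructor
    · exact ⟨le_refl 0, zero_le_one⟩
    · have : (Finset.univ.filter (fun k => (0:ℝ) ≤ A k φ)) = Finset.univ := by
        apply Finset.filter_true_of_mem
        intro k _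
        exact (hA k φ).1
      rw [this]
      simpa using hqn
  have hbdd : BddAbove S := ⟨1, fun a ha => ha.1.2⟩
  have hne : S.Nonempty := ⟨0, h0S⟩
  set m := sSup S with hm
  -- key: m ∈ S, in particular q ≤ card {k | m ≤ A k φ}
  have hmem : q ≤ (Finset.univ.filter (fun k => m ≤ A k φ)).card := by
    by_contra hlt
    push_neg at hlt
    -- the complement is nonempty
    set T := Finset.univ.filter (fun k => m ≤ A k φ) with hT
    have hTc : Tᶜ.Nonempty := by
      rw [← Finset.card_pos, Finset.card_compl]
      have h1 : T.card < n := lt_of_lt_of_le hlt hqn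
      simp only [Fintype.card_fin]
      omega
    obtain ⟨b, hbmem, hbmax⟩ := Tᶜ.exists_max_image (fun k => A k φ) hTc
    have hbT : A b φ < m := by
      by_contra hge
      push_neg at hge
      have : b ∈ T := Finset.mem_filter.mpr ⟨Finset.mem_univ b, hge⟩
      exact (Finset.mem_compl.mp hbmem) this
    -- every element of S is ≤ A b φ
    have hub : ∀ a ∈ S, a ≤ A b φ := by
      intro a haS
      by_contra hgt
      push_neg at hgt
      -- then filter (a ≤ ·) ⊆ T
      have hsub : Finset.univ.filter (fun k => a ≤ A k φ) ⊆ T := by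
        intro k hk
        rw [Finset.mem_filter] at hk
        rw [hT, Finset.mem_filter]
        refine ⟨Finset.mem_univ k, ?_⟩
        by_contra hkm
        push_neg at hkm
        have : k ∈ Tᶜ := Finset.mem_compl.mpr (by
          rw [hT, Finset.mem_filter]
          push_neg
          intro _; exact hkm)
        have := hbmax k this
        have : a ≤ A b φ := le_trans hk.2 this
        exact absurd this (not_le.mpr hgt)
      have := Finset.card_le_card hsub
      have := le_trans haS.2 this
      omega
    have : m ≤ A b φ := csSup_le hne hub
    exact absurd (lt_of_le_of_lt this hbT) (lt_irrefl m)
  constructor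
  · intro hc
    have hsub : Finset.univ.filter (fun k => m ≤ A k φ) ⊆
        Finset.univ.filter (fun k => c φ ≤ A k φ) := by
      intro k hk
      rw [Finset.mem_filter] at hk ⊢
      exact ⟨hk.1, le_trans hc hk.2⟩
    exact le_trans hmem (Finset.card_le_card hsub)
  · intro hc
    rcases le_or_gt (c φ) 0 with h | h
    · exact le_trans h (le_csSup hbdd h0S)
    · have hc1 : c φ ≤ 1 := by
        have hne' : (Finset.univ.filter (fun k => c φ ≤ A k φ)).Nonempty := by
          rw [← Finset.card_pos]; omega
        obtain ⟨k, hk⟩ := hne'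
        rw [Finset.mem_filter] at hk
        exact le_trans hk.2 (hA k φ).2
      exact le_csSup hbdd ⟨⟨le_of_lt h, hc1⟩, hc⟩
end

section
/- Theorem (majority correspondence): Let I be a finite type, n ≥ 1, and let J : Fin n → Finset I be a crisp profile (J k is the set of issues accepted by source k). Let A* be the corresponding likelihood profile, A* k φ = 1 if φ ∈ J k and A* k φ = 0 otherwise, and let c : I → ℝ satisfy 0 < c φ ≤ 1 for every φ ∈ I. Then the classical majoritarian set m(P) = {φ : n < 2 · card {k : φ ∈ J k}} (the issues supported by a strict majority of sources) equals crisp(f_q(A*), c) with quota q = ⌊n/2⌋ + 1, the likelihood majoritarian set of A* crispified with c. -/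
/-- Majority correspondence: the classical majoritarian set `m(P)` of a crisp
profile `J` equals the crispification (with any vector `c` with `0 < c φ ≤ 1`)
of the uniform quota aggregate, with quota `q = ⌊n/2⌋ + 1`, of the
corresponding likelihood profile `A*` (`A* k φ = 1` if `φ ∈ J k`, else `0`). -/
theorem majoritarian_set_eq_crisp_quota {I : Type*} [Fintype I] [DecidableEq I]
    (n : ℕ) (hn : 1 ≤ n) (J : Fin n → Finset I)
    (c : I → ℝ) (hc : ∀ φ, 0 < c φ ∧ c φ ≤ 1) :
    {φ : I | n < 2 * (Finset.univ.filter (fun k => φ ∈ J k)).card} =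
      {φ : I | c φ ≤ sSup {a ∈ Set.Icc (0:ℝ) 1 |
        n / 2 + 1 ≤ (Finset.univ.filter
          (fun k => a ≤ (if φ ∈ J k then (1:ℝ) else 0))).card}} := by
  ext φ
  simp only [Set.mem_setOf_eq]
  set m := (Finset.univ.filter (fun k => φ ∈ J k)).card with hm
  constructor
  · intro h
    have hset : {a ∈ Set.Icc (0:ℝ) 1 |
        n / 2 + 1 ≤ (Finset.univ.filter
          (fun k => a ≤ (if φ ∈ J k then (1:ℝ) else 0))).card} = Set.Icc 0 1 := by
      ext a
      constructor
      · rintro ⟨ha, _⟩; exact ha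
      · intro ha
        refine ⟨ha, ?_⟩
        have hsub : (Finset.univ.filter (fun k => φ ∈ J k)) ⊆
            Finset.univ.filter (fun k => a ≤ (if φ ∈ J k then (1:ℝ) else 0)) := by
          intro k hk
          simp only [Finset.mem_filter, Finset.mem_univ, true_and] at hk ⊢
          rw [if_pos hk]; exact ha.2
        calc n / 2 + 1 ≤ m := by omega
          _ ≤ _ := Finset.card_le_card hsub
    rw [hset, csSup_Icc (by norm_num : (0:ℝ) ≤ 1)]
    exact (hc φ).2
  · intro h
    by_contra hlt
    push_neg at hlt
    have hset : {a ∈ Set.Icc (0:ℝ) 1 |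
        n / 2 + 1 ≤ (Finset.univ.filter
          (fun k => a ≤ (if φ ∈ J k then (1:ℝ) else 0))).card} = {0} := by
      ext a
      constructor
      · rintro ⟨ha, hcard⟩
        by_contra ha0
        have hapos : 0 < a := lt_of_le_of_ne ha.1 (Ne.symm ha0)
        have : (Finset.univ.filter (fun k => a ≤ (if φ ∈ J k then (1:ℝ) else 0))) =
            Finset.univ.filter (fun k => φ ∈ J k) := by
          apply Finset.filter_congr
          intro k _
          by_cases hk : φ ∈ J k
          · simp [hk, ha.2]
          · simp [hk]
            exact hapos
        rw [this] at hcard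
        omega
      · rintro rfl
        refine ⟨⟨le_refl 0, by norm_num⟩, ?_⟩
        have : (Finset.univ.filter (fun k => (0:ℝ) ≤ (if φ ∈ J k then (1:ℝ) else 0))) =
            (Finset.univ : Finset (Fin n)) := by
          apply Finset.filter_true_of_mem
          intro k _
          split <;> norm_num
        rw [this]
        simp only [Finset.card_univ, Fintype.card_fin]
        omega
    rw [hset, csSup_singleton] at h
    exact absurd h (not_le.mpr (hc φ).1)
end
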